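/- arXiv:1909.07362 — 3 statements merged into one kernel-verified Lean document; each statement's English description precedes it below -/
import Mathlib

section
/- For any real $x < -1$ and any integer $k \ge 0$, there is a constant $C > 0$ such that for all sufficiently small $\epsilon > 0$, $\int_0^1 (s+\epsilon)^x \left(\log(s/\epsilon + 3)\right)^k\, ds \le C\, \epsilon^{x+1}$. -/
/-!
Bound the logarithm by a small power: `log u ≤ u ^ δ / δ`. Since `s / ε + 3 ≤ 3 (s + ε) / ε`,
the factor `log (s / ε + 3) ^ k` costs at most a constant times `((s + ε) / ε) ^ (δ k)`, so the
integrand is dominated by `ε ^ (-δ k) (s + ε) ^ (x + δ k)`. For `δ` so small that `x + δ k < -1`,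
the integral of `(s + ε) ^ y` over `(0, 1)` is at most `ε ^ (y + 1) / (-(y + 1))`, and the powers
of `ε` combine to `ε ^ (x + 1)`.
-/

open Real MeasureTheory

lemma Real.log_pow_le_rpow_mul_div {u δ : ℝ} (hu : 1 ≤ u) (hδ : 0 < δ) (k : ℕ) :
    log u ^ k ≤ u ^ (δ * k) / δ ^ k := by
  calc log u ^ k ≤ (u ^ δ / δ) ^ k :=
        pow_le_pow_left₀ (log_nonneg hu) (log_le_rpow_div (by linarith) hδ) k
    _ = u ^ (δ * k) / δ ^ k := by
        rw [div_pow, ← rpow_natCast (u ^ δ) k, ← rpow_mul (by linarith)]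

lemma rpow_mul_log_div_add_pow_le {s ε c x δ : ℝ} (hs : 0 ≤ s) (hε : 0 < ε) (hc : 1 ≤ c)
    (hδ : 0 < δ) (k : ℕ) :
    (s + ε) ^ x * log (s / ε + c) ^ k
      ≤ c ^ (δ * k) / δ ^ k * ε ^ (-(δ * k)) * (s + ε) ^ (x + δ * k) := by
  have hsε : 0 < s + ε := by linarith
  have hu : 1 ≤ s / ε + c := by linarith [div_nonneg hs hε.le]
  have hle : s / ε + c ≤ c * (s + ε) / ε := by
    rw [mul_add, add_div, mul_div_cancel_right₀ _ hε.ne', mul_div_assoc]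
    gcongr
    exact le_mul_of_one_le_left (by positivity) hc
  calc (s + ε) ^ x * log (s / ε + c) ^ k
      ≤ (s + ε) ^ x * ((c * (s + ε) / ε) ^ (δ * k) / δ ^ k) := by
        gcongr
        exact (log_pow_le_rpow_mul_div hu hδ k).trans (by gcongr)
    _ = c ^ (δ * k) / δ ^ k * ε ^ (-(δ * k)) * (s + ε) ^ (x + δ * k) := by
        rw [div_rpow (by positivity) hε.le, mul_rpow (by linarith) hsε.le, rpow_add hsε,
          rpow_neg hε.le]
        field_simp

lemma integral_Ioo_add_rpow {ε y : ℝ} (hε : 0 < ε) (hy : y ≠ -1) :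
    ∫ s in Set.Ioo (0 : ℝ) 1, (s + ε) ^ y = ((1 + ε) ^ (y + 1) - ε ^ (y + 1)) / (y + 1) := by
  rw [← integral_Ioc_eq_integral_Ioo, ← intervalIntegral.integral_of_le zero_le_one,
    intervalIntegral.integral_comp_add_right (fun u : ℝ => u ^ y), zero_add,
    integral_rpow (Or.inr ⟨hy, Set.notMem_uIcc_of_lt hε (by linarith)⟩)]

lemma integral_Ioo_add_rpow_le {ε y : ℝ} (hε : 0 < ε) (hy : y < -1) :
    ∫ s in Set.Ioo (0 : ℝ) 1, (s + ε) ^ y ≤ ε ^ (y + 1) / (-(y + 1)) := by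
  rw [integral_Ioo_add_rpow hε hy.ne, ← neg_div_neg_eq, neg_sub]
  have : 0 ≤ (1 + ε) ^ (y + 1) := rpow_nonneg (by linarith) _
  gcongr
  · linarith
  · linarith

lemma integrableOn_Ioo_add_rpow {ε : ℝ} (hε : 0 < ε) (y : ℝ) :
    IntegrableOn (fun s : ℝ => (s + ε) ^ y) (Set.Ioo 0 1) := by
  refine (ContinuousOn.integrableOn_Icc ?_).mono_set Set.Ioo_subset_Icc_self
  exact ContinuousOn.rpow_const (by fun_prop) fun s hs => Or.inl (by linarith [hs.1])

theorem integral_rpow_mul_log_div_add_pow_le {x δ ε c : ℝ} (hδ : 0 < δ) (hε : 0 < ε)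
    (hc : 1 ≤ c) (k : ℕ) (hxδ : x + δ * k < -1) :
    ∫ s in Set.Ioo (0 : ℝ) 1, (s + ε) ^ x * log (s / ε + c) ^ k
      ≤ c ^ (δ * k) / (δ ^ k * (-(x + δ * k + 1))) * ε ^ (x + 1) := by
  set A := c ^ (δ * k) / δ ^ k * ε ^ (-(δ * k))
  have hA : 0 ≤ A := by positivity
  calc ∫ s in Set.Ioo (0 : ℝ) 1, (s + ε) ^ x * log (s / ε + c) ^ k
      ≤ ∫ s in Set.Ioo (0 : ℝ) 1, A * (s + ε) ^ (x + δ * k) := by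
        refine integral_mono_of_nonneg ?_ ((integrableOn_Ioo_add_rpow hε _).const_mul A) ?_
        all_goals filter_upwards [ae_restrict_mem measurableSet_Ioo] with s hs
        · have hu : 1 ≤ s / ε + c := by linarith [div_nonneg hs.1.le hε.le]
          exact mul_nonneg (rpow_nonneg (by linarith [hs.1]) x) (pow_nonneg (log_nonneg hu) k)
        · exact rpow_mul_log_div_add_pow_le hs.1.le hε hc hδ k
    _ ≤ A * (ε ^ (x + δ * k + 1) / (-(x + δ * k + 1))) := by
        rw [integral_const_mul]
        exact mul_le_mul_of_nonneg_left (integral_Ioo_add_rpow_le hε hxδ) hA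
    _ = c ^ (δ * k) / (δ ^ k * (-(x + δ * k + 1))) * ε ^ (x + 1) := by
        have hpow : ε ^ (-(δ * k)) * ε ^ (x + δ * k + 1) = ε ^ (x + 1) := by
          rw [← rpow_add hε]; ring_nf
        rw [← hpow]
        simp only [A]
        field_simp

theorem stmt2 (x : ℝ) (hx : x < -1) (k : ℕ) :
    ∃ C > (0 : ℝ), ∃ ε₀ > (0 : ℝ), ∀ ε : ℝ, 0 < ε → ε < ε₀ →
      ∫ s in Set.Ioo (0 : ℝ) 1, (s + ε) ^ x * (Real.log (s / ε + 3)) ^ k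
        ≤ C * ε ^ (x + 1) := by
  set δ : ℝ := (-1 - x) / (2 * (k + 1))
  have hδ : 0 < δ := div_pos (by linarith) (by positivity)
  have hxδ : x + δ * k < -1 := by
    have : δ * (k + 1) = (-1 - x) / 2 := by simp only [δ]; field_simp
    nlinarith
  refine ⟨3 ^ (δ * k) / (δ ^ k * (-(x + δ * k + 1))), div_pos (by positivity)
    (mul_pos (by positivity) (by linarith)), 1, one_pos, fun ε hε _ => ?_⟩
  exact integral_rpow_mul_log_div_add_pow_le hδ hε (by norm_num) k hxδ
end

section
/- Let $m \ge 2$ and $\alpha > 0$ with $m\alpha^2 > 1$. Define $I_\epsilon(\alpha) = \int_{[0,2\pi)^m} \prod_{1 \le j < k \le m} \left(\sin\left|\frac{t_j - t_k}{2}\right| + \epsilon\right)^{-2\alpha^2} dt_1 \cdots dt_m$. Then there exist constants $c > 0$ and $\epsilon_0 > 0$ such that for all $0 < \epsilon < \epsilon_0$, $c\, \epsilon^{m - 1 - m(m-1)\alpha^2} \le I_\epsilon(\alpha)$. -/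
/-!
Restrict the integral to the `⌊1/ε⌋` disjoint cubes `[kε, (k+1)ε)^m` along the diagonal of
`[0, 1)^m ⊆ [0, 2π)^m`. On each of them every `|t_j - t_k| < ε`, so, as `sin x ≤ x`, each of the
`m(m-1)/2` factors is at least `(2ε)^(-2α²)`, while the cubes have total volume
`⌊1/ε⌋ ε^m ≥ ε^(m-1) / 2`.
-/

open Real MeasureTheory Finset

/-- `2 sin |(t_j - t_k) / 2|` is the chord length `|e^{i t_j} - e^{i t_k}|`. -/
noncomputable def chordProduct (m : ℕ) (ε s : ℝ) (t : Fin m → ℝ) : ℝ :=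
  ∏ p ∈ univ.filter (fun p : Fin m × Fin m => p.1 < p.2), (sin |(t p.1 - t p.2) / 2| + ε) ^ s

lemma sin_abs_half_nonneg {x : ℝ} (hx : |x| ≤ 2 * π) : 0 ≤ sin |x / 2| :=
  sin_nonneg_of_nonneg_of_le_pi (abs_nonneg _) (by rw [abs_div, abs_two]; linarith)

lemma abs_sub_lt_of_mem_Ico {a h x y : ℝ} (hx : x ∈ Set.Ico a (a + h))
    (hy : y ∈ Set.Ico a (a + h)) : |x - y| < h :=
  abs_sub_lt_iff.2 ⟨by linarith [hx.2, hy.1], by linarith [hx.1, hy.2]⟩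

lemma two_mul_rpow_le_sin_abs_half_add_rpow {x ε s : ℝ} (hx : |x| < ε) (hx' : |x| ≤ 2 * π)
    (hs : s ≤ 0) : (2 * ε) ^ s ≤ (sin |x / 2| + ε) ^ s := by
  have hsin_nonneg : 0 ≤ sin |x / 2| := sin_abs_half_nonneg hx'
  have hsin_le : sin |x / 2| ≤ |x| / 2 := by
    simpa only [abs_div, abs_two] using sin_le (abs_nonneg (x / 2))
  exact rpow_le_rpow_of_nonpos (by linarith [abs_nonneg x]) (by linarith) hs

section chordProduct

variable {m : ℕ} {ε s : ℝ}

lemma chordProduct_nonneg {t : Fin m → ℝ} (hε : 0 ≤ ε)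
    (ht : ∀ i j, |t i - t j| ≤ 2 * π) : 0 ≤ chordProduct m ε s t :=
  prod_nonneg fun p _ => rpow_nonneg (add_nonneg (sin_abs_half_nonneg (ht p.1 p.2)) hε) _

lemma rpow_pow_card_le_chordProduct {t : Fin m → ℝ} (hε : 0 < ε) (hs : s ≤ 0)
    (ht : ∀ i j, |t i - t j| < ε) (ht' : ∀ i j, |t i - t j| ≤ 2 * π) :
    ((2 * ε) ^ s) ^ #{p : Fin m × Fin m | p.1 < p.2} ≤ chordProduct m ε s t := by
  rw [chordProduct, ← prod_const]
  exact prod_le_prod (fun _ _ => by positivity)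
    fun p _ => two_mul_rpow_le_sin_abs_half_add_rpow (ht p.1 p.2) (ht' p.1 p.2) hs

lemma integrableOn_chordProduct (hε : 0 < ε) :
    IntegrableOn (chordProduct m ε s) (Set.univ.pi fun _ => Set.Icc 0 (2 * π)) := by
  refine ContinuousOn.integrableOn_compact (isCompact_univ_pi fun _ => isCompact_Icc) ?_
  refine continuousOn_finsetProd _ fun p _ => ContinuousOn.rpow_const (by fun_prop) ?_
  intro t ht
  have hi := ht p.1 trivial
  have hj := ht p.2 trivial
  exact Or.inl (ne_of_gt (add_pos_of_nonneg_of_pos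
    (sin_abs_half_nonneg (abs_sub_le_of_nonneg_of_le hi.1 hi.2 hj.1 hj.2)) hε))

end chordProduct

lemma rpow_pow_card_pairs (m : ℕ) {x : ℝ} (hx : 0 ≤ x) (β : ℝ) :
    (x ^ (-2 * β)) ^ #{p : Fin m × Fin m | p.1 < p.2} = x ^ (-(m * (m - 1) * β)) := by
  rw [Fintype.card_product_filter_lt, Fintype.card_fin, ← rpow_natCast, ← rpow_mul hx,
    Nat.cast_choose_two]
  ring_nf

section diagonalCubes

variable {ι : Type*} {ε : ℝ} {K : ℕ}

def diagonalCubes (ι : Type*) (ε : ℝ) (K : ℕ) : Set (ι → ℝ) :=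
  ⋃ k ∈ range K, Set.univ.pi fun _ => Set.Ico (k * ε) (k * ε + ε)

lemma measurableSet_diagonalCubes [Countable ι] : MeasurableSet (diagonalCubes ι ε K) :=
  Finset.measurableSet_biUnion _ fun _ _ => MeasurableSet.univ_pi fun _ => measurableSet_Ico

lemma abs_sub_lt_of_mem_diagonalCubes {t : ι → ℝ} (ht : t ∈ diagonalCubes ι ε K) (i j : ι) :
    |t i - t j| < ε := by
  simp only [diagonalCubes, Set.mem_iUnion] at ht
  obtain ⟨k, -, hk⟩ := ht
  exact abs_sub_lt_of_mem_Ico (hk i trivial) (hk j trivial)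

lemma diagonalCubes_subset (hε : 0 ≤ ε) :
    diagonalCubes ι ε K ⊆ {t | ∀ i, t i ∈ Set.Ico 0 (K * ε)} := by
  simp only [diagonalCubes, Set.iUnion_subset_iff, mem_range]
  intro k hk t ht i
  have hki := ht i trivial
  have hk' : (k : ℝ) + 1 ≤ K := by exact_mod_cast hk
  exact ⟨by nlinarith [hki.1], by nlinarith [hki.2]⟩

lemma measureReal_diagonalCubes [Fintype ι] [Nonempty ι] (hε : 0 < ε) (K : ℕ) :
    volume.real (diagonalCubes ι ε K) = K * ε ^ Fintype.card ι := by
  have hdisj : (range K : Set ℕ).PairwiseDisjoint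
      fun k : ℕ => Set.univ.pi fun _ : ι => Set.Ico (k * ε) (k * ε + ε) := by
    intro k _ l _ hkl
    refine Set.disjoint_univ_pi.2
      ⟨Classical.arbitrary ι, Set.disjoint_left.2 fun x hk hl => hkl ?_⟩
    have h1 : (k : ℝ) < l + 1 := lt_of_mul_lt_mul_right (by linarith [hk.1, hl.2]) hε.le
    have h2 : (l : ℝ) < k + 1 := lt_of_mul_lt_mul_right (by linarith [hl.1, hk.2]) hε.le
    norm_cast at h1 h2
    omega
  have hcube (k : ℕ) : volume (Set.univ.pi fun _ : ι => Set.Ico (k * ε) (k * ε + ε))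
      = ENNReal.ofReal (ε ^ Fintype.card ι) := by
    simp [volume_pi_pi, Real.volume_Ico, ENNReal.ofReal_pow hε.le]
  rw [diagonalCubes, measureReal_biUnion_finset hdisj
    (fun _ _ => MeasurableSet.univ_pi fun _ => measurableSet_Ico) (by simp [hcube])]
  simp [measureReal_def, hcube, hε.le]

end diagonalCubes

lemma rpow_pow_card_mul_le_setIntegral_chordProduct {m : ℕ} (hm : 0 < m) {ε s : ℝ} {K : ℕ}
    (hε : 0 < ε) (hK : K * ε ≤ 2 * π) (hs : s ≤ 0) :
    ((2 * ε) ^ s) ^ #{p : Fin m × Fin m | p.1 < p.2} * (K * ε ^ m) ≤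
      ∫ t in {t : Fin m → ℝ | ∀ i, t i ∈ Set.Ico 0 (2 * π)}, chordProduct m ε s t := by
  set C := ((2 * ε) ^ s) ^ #{p : Fin m × Fin m | p.1 < p.2}
  have : Nonempty (Fin m) := Fin.pos_iff_nonempty.1 hm
  set D : Set (Fin m → ℝ) := {t | ∀ i, t i ∈ Set.Ico 0 (2 * π)}
  have hD_pairs {t} (ht : t ∈ D) (i j : Fin m) : |t i - t j| ≤ 2 * π :=
    (abs_sub_lt_of_nonneg_of_lt (ht i).1 (ht i).2 (ht j).1 (ht j).2).le
  have hUD : diagonalCubes (Fin m) ε K ⊆ D := fun t ht i =>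
    Set.Ico_subset_Ico_right hK (diagonalCubes_subset hε.le ht i)
  have hD_Icc : D ⊆ Set.univ.pi fun _ => Set.Icc 0 (2 * π) :=
    fun t ht i _ => Set.Ico_subset_Icc_self (ht i)
  have hD_meas : MeasurableSet D := by measurability
  have hD_fin : volume D ≠ ⊤ :=
    measure_ne_top_of_subset hD_Icc (isCompact_univ_pi fun _ => isCompact_Icc).measure_ne_top
  have hint : IntegrableOn (chordProduct m ε s) D :=
    (integrableOn_chordProduct hε).mono_set hD_Icc
  calc C * (K * ε ^ m) = C * volume.real (diagonalCubes (Fin m) ε K) := by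
        rw [measureReal_diagonalCubes hε, Fintype.card_fin]
    _ ≤ ∫ t in diagonalCubes (Fin m) ε K, chordProduct m ε s t :=
        setIntegral_ge_of_const_le_real measurableSet_diagonalCubes
          (measure_ne_top_of_subset hUD hD_fin) (fun t ht => rpow_pow_card_le_chordProduct hε hs
            (abs_sub_lt_of_mem_diagonalCubes ht) (hD_pairs (hUD ht))) (hint.mono_set hUD)
    _ ≤ ∫ t in D, chordProduct m ε s t :=
        setIntegral_mono_set hint
          ((ae_restrict_iff' hD_meas).2
            (ae_of_all _ fun t ht => chordProduct_nonneg hε.le (hD_pairs ht)))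
          hUD.eventuallyLE

theorem stmt5_general (m : ℕ) (hm : 2 ≤ m) (α : ℝ) :
    ∃ c > (0 : ℝ), ∃ ε₀ > (0 : ℝ), ∀ ε : ℝ, 0 < ε → ε < ε₀ →
      c * ε ^ ((m : ℝ) - 1 - m * (m - 1) * α ^ 2) ≤
        ∫ t in {t : Fin m → ℝ | ∀ i, t i ∈ Set.Ico (0 : ℝ) (2 * π)},
          ∏ p ∈ Finset.univ.filter (fun p : Fin m × Fin m => p.1 < p.2),
            (Real.sin |(t p.1 - t p.2) / 2| + ε) ^ (-2 * α ^ 2) := by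
  set M : ℝ := m * (m - 1) * α ^ 2
  refine ⟨2 ^ (-M) / 2, by positivity, 1 / 2, by norm_num, fun ε hε hε₀ => ?_⟩
  set K := ⌊1 / ε⌋₊
  have hK_ge : 1 / (2 * ε) ≤ K := by
    have h1 : 1 / ε - 1 < K := Nat.sub_one_lt_floor (1 / ε)
    have h2 : 1 / (2 * ε) ≤ 1 / ε - 1 := by
      rw [div_sub_one hε.ne', div_le_div_iff₀ (by positivity) hε]
      nlinarith
    linarith
  have hKε : K * ε ≤ 2 * π := by
    have := (le_div_iff₀ hε).1 (Nat.floor_le (one_div_pos.2 hε).le)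
    linarith [pi_gt_three]
  calc 2 ^ (-M) / 2 * ε ^ ((m : ℝ) - 1 - M)
      = (2 * ε) ^ (-M) * (1 / (2 * ε) * ε ^ m) := by
        rw [mul_rpow (by norm_num) hε.le, ← rpow_natCast, sub_sub, rpow_sub hε, rpow_add hε,
          rpow_one, rpow_neg hε.le]
        field_simp
    _ ≤ (2 * ε) ^ (-M) * (K * ε ^ m) := by gcongr
    _ = ((2 * ε) ^ (-2 * α ^ 2)) ^ #{p : Fin m × Fin m | p.1 < p.2} * (K * ε ^ m) := by
        rw [rpow_pow_card_pairs m (by positivity)]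
    _ ≤ _ := rpow_pow_card_mul_le_setIntegral_chordProduct (by omega) hε hKε
        (by nlinarith [sq_nonneg α])

theorem stmt5 (m : ℕ) (hm : 2 ≤ m) (α : ℝ) (hα : 0 < α) (h : 1 < (m : ℝ) * α ^ 2) :
    ∃ c > (0 : ℝ), ∃ ε₀ > (0 : ℝ), ∀ ε : ℝ, 0 < ε → ε < ε₀ →
      c * ε ^ ((m : ℝ) - 1 - m * (m - 1) * α ^ 2) ≤
        ∫ t in {t : Fin m → ℝ | ∀ i, t i ∈ Set.Ico (0 : ℝ) (2 * π)},
          ∏ p ∈ Finset.univ.filter (fun p : Fin m × Fin m => p.1 < p.2),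
            (Real.sin |(t p.1 - t p.2) / 2| + ε) ^ (-2 * α ^ 2) :=
  stmt5_general m hm α
end

section
/- Let $m \ge 2$ and $\alpha > 0$ with $2\alpha^2 > 1$. Then $\int_{[0,1)^{m-1}} \prod_{1 \le j \le k \le m-1} \left(\sum_{i=j}^k s_i + \epsilon\right)^{-2\alpha^2} ds_1 \cdots ds_{m-1} = \mathcal{O}\left(\epsilon^{(m-1)(1 - m\alpha^2)}\right)$ as $\epsilon \to 0$. -/
/-!
For an interval `I` of length `k`, every `i ∈ I` has `s i + ε ≤ ∑_{j ∈ I} s j + ε`, so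
`(∑_{j ∈ I} s j + ε)^(-q) ≤ ∏_{i ∈ I} (s i + ε)^(-q/k)`. Multiplying over all intervals bounds
the integrand by the separable function `∏ i, (s i + ε)^(-q w i)`, where `w i = ∑_{I ∋ i} 1/|I|`.
The singleton interval gives `w i ≥ 1`, so with `q = 2α² > 1` each one-dimensional integral is
at most `ε^(1 - q w i) / (q w i - 1)`; and `∑ i, w i` is the number `m(m-1)/2` of intervals, so
the exponents add up to `(m - 1) - α² m (m - 1)`.
-/

open Real MeasureTheory Finset

lemma rpow_neg_sum_add_le_prod {ι : Type*} {t : Finset ι} (ht : t.Nonempty) {s : ι → ℝ}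
    (hs : ∀ i ∈ t, 0 ≤ s i) {ε q : ℝ} (hε : 0 < ε) (hq : 0 ≤ q) :
    (∑ i ∈ t, s i + ε) ^ (-q) ≤ ∏ i ∈ t, (s i + ε) ^ (-q / #t) := by
  have hsum : 0 ≤ ∑ i ∈ t, s i := sum_nonneg hs
  have hcard : (#t : ℝ) ≠ 0 := by exact_mod_cast ht.card_pos.ne'
  calc (∑ i ∈ t, s i + ε) ^ (-q) = ∏ _i ∈ t, (∑ i ∈ t, s i + ε) ^ (-q / #t) := by
        rw [prod_const, ← rpow_mul_natCast (by linarith), div_mul_cancel₀ _ hcard]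
    _ ≤ ∏ i ∈ t, (s i + ε) ^ (-q / #t) := by
        refine prod_le_prod (fun _ _ => by positivity) fun i hi => ?_
        refine rpow_le_rpow_of_nonpos (by linarith [hs i hi]) ?_ ?_
        · linarith [single_le_sum hs hi]
        · exact div_nonpos_of_nonpos_of_nonneg (by linarith) (Nat.cast_nonneg _)

section CoverWeight

variable {κ ι : Type*} [DecidableEq ι] (P : Finset κ) (t : κ → Finset ι)

lemma prod_prod_rpow_eq_prod_rpow_sum [Fintype ι] (e : κ → ℝ) {x : ι → ℝ}
    (hx : ∀ i, 0 < x i) :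
    ∏ p ∈ P, ∏ i ∈ t p, x i ^ e p = ∏ i, x i ^ ∑ p ∈ P with i ∈ t p, e p := by
  rw [prod_comm' (t' := univ) (s' := fun i => {p ∈ P | i ∈ t p}) (by simp)]
  exact prod_congr rfl fun i _ => (rpow_sum_of_pos (hx i) _ _).symm

noncomputable def coverWeight (i : ι) : ℝ :=
  ∑ p ∈ P with i ∈ t p, (#(t p) : ℝ)⁻¹

variable {P t}

lemma sum_coverWeight [Fintype ι] (ht : ∀ p ∈ P, (t p).Nonempty) :
    ∑ i, coverWeight P t i = #P := by
  unfold coverWeight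
  rw [sum_comm' (t' := P) (s' := t) (by simp [and_comm]), card_eq_sum_ones, Nat.cast_sum]
  refine sum_congr rfl fun p hp => ?_
  rw [sum_const, nsmul_eq_mul, mul_inv_cancel₀ (by exact_mod_cast (ht p hp).card_pos.ne'),
    Nat.cast_one]

lemma one_le_coverWeight {i : ι} {p : κ} (hp : p ∈ P) (hpi : t p = {i}) :
    1 ≤ coverWeight P t i := by
  unfold coverWeight
  have hmem : p ∈ {p ∈ P | i ∈ t p} := by simp [hp, hpi]
  calc (1 : ℝ) = (#(t p) : ℝ)⁻¹ := by simp [hpi]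
    _ ≤ _ := single_le_sum (f := fun p => (#(t p) : ℝ)⁻¹) (fun _ _ => by positivity) hmem

lemma prod_rpow_neg_sum_add_le [Fintype ι] {s : ι → ℝ} (hs : ∀ i, 0 ≤ s i)
    (ht : ∀ p ∈ P, (t p).Nonempty) {ε q : ℝ} (hε : 0 < ε) (hq : 0 ≤ q) :
    ∏ p ∈ P, (∑ i ∈ t p, s i + ε) ^ (-q) ≤ ∏ i, (s i + ε) ^ (-(q * coverWeight P t i)) := by
  calc ∏ p ∈ P, (∑ i ∈ t p, s i + ε) ^ (-q)
      ≤ ∏ p ∈ P, ∏ i ∈ t p, (s i + ε) ^ (-q / #(t p)) :=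
        prod_le_prod (fun p _ => by have := sum_nonneg fun i (_ : i ∈ t p) => hs i; positivity)
          fun p hp => rpow_neg_sum_add_le_prod (ht p hp) (fun i _ => hs i) hε hq
    _ = ∏ i, (s i + ε) ^ (-(q * coverWeight P t i)) := by
        rw [prod_prod_rpow_eq_prod_rpow_sum _ _ _ fun i => by linarith [hs i]]
        simp only [coverWeight, mul_sum, ← sum_neg_distrib, div_eq_mul_inv, neg_mul]

end CoverWeight

lemma card_filter_fst_le_snd (n : ℕ) :
    (#{p : Fin n × Fin n | p.1 ≤ p.2} : ℝ) = n * (n + 1) / 2 := by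
  have hcard : #{p : Fin n × Fin n | p.1 ≤ p.2} = ∑ j ∈ range n, (j + 1) := by
    rw [card_filter, ← univ_product_univ, sum_product, ← Fin.sum_univ_eq_sum_range (· + 1),
      ← Equiv.sum_comp Fin.revPerm]
    refine sum_congr rfl fun j _ => ?_
    rw [← card_filter, filter_le_eq_Ici, Fin.card_Ici, Fin.revPerm_apply, Fin.val_rev]
    omega
  rw [hcard, Nat.cast_sum]
  clear hcard
  induction n with
  | zero => simp
  | succ n ih => rw [sum_range_succ, ih]; push_cast; ring

lemma integral_Ico_add_rpow_neg_le {r δ : ℝ} (hr : 1 < r) (hδ : 0 < δ) :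
    ∫ x in Set.Ico (0 : ℝ) 1, (x + δ) ^ (-r) ≤ δ ^ (1 - r) / (r - 1) := by
  have hint :
      ∫ x in (0 : ℝ)..1, (x + δ) ^ (-r) = ((1 + δ) ^ (1 - r) - δ ^ (1 - r)) / (1 - r) := by
    rw [intervalIntegral.integral_comp_add_right (· ^ (-r)), zero_add, integral_rpow]
    · ring_nf
    · refine Or.inr ⟨by linarith, ?_⟩
      rw [Set.uIcc_of_le (by linarith)]
      exact fun h0 => absurd h0.1 (by linarith)
  rw [integral_Ico_eq_integral_Ioc, ← intervalIntegral.integral_of_le zero_le_one, hint,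
    ← neg_div_neg_eq, neg_sub, neg_sub]
  exact div_le_div_of_nonneg_right (sub_le_self _ (by positivity)) (by linarith)

lemma integrableOn_Ico_add_rpow (r : ℝ) {δ : ℝ} (hδ : 0 < δ) :
    IntegrableOn (fun x : ℝ => (x + δ) ^ (-r)) (Set.Ico 0 1) := by
  refine (ContinuousOn.integrableOn_Icc ?_).mono_set Set.Ico_subset_Icc_self
  exact (continuousOn_id.add continuousOn_const).rpow_const fun x hx =>
    Or.inl (by have := hx.1; simp only [Pi.add_apply, id]; positivity)

section UnitCube

variable {ι : Type*} [Fintype ι]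

lemma volume_restrict_unitCube :
    volume.restrict {s : ι → ℝ | ∀ i, s i ∈ Set.Ico (0 : ℝ) 1}
      = Measure.pi fun _ => volume.restrict (Set.Ico (0 : ℝ) 1) := by
  rw [← Measure.restrict_pi_pi, volume_pi]
  congr 1
  ext s
  simp

lemma integral_unitCube_prod_add_rpow_neg_le {r : ι → ℝ} (hr : ∀ i, 1 < r i) {δ : ℝ}
    (hδ : 0 < δ) :
    ∫ s in {s : ι → ℝ | ∀ i, s i ∈ Set.Ico (0 : ℝ) 1}, ∏ i, (s i + δ) ^ (-r i)
      ≤ ∏ i, δ ^ (1 - r i) / (r i - 1) := by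
  rw [volume_restrict_unitCube, integral_fintype_prod_eq_prod (fun i x => (x + δ) ^ (-r i))]
  refine prod_le_prod (fun i _ => ?_) fun i _ => integral_Ico_add_rpow_neg_le (hr i) hδ
  exact setIntegral_nonneg measurableSet_Ico fun x hx => by have := hx.1; positivity

lemma integrableOn_unitCube_prod_add_rpow (r : ι → ℝ) {δ : ℝ} (hδ : 0 < δ) :
    IntegrableOn (fun s : ι → ℝ => ∏ i, (s i + δ) ^ (-r i))
      {s : ι → ℝ | ∀ i, s i ∈ Set.Ico (0 : ℝ) 1} := by
  rw [IntegrableOn, volume_restrict_unitCube]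
  exact Integrable.fintype_prod fun i => integrableOn_Ico_add_rpow (r i) hδ

lemma integral_unitCube_prod_rpow_neg_sum_add_le [DecidableEq ι] {κ : Type*} {P : Finset κ}
    {t : κ → Finset ι} (ht : ∀ p ∈ P, (t p).Nonempty) {ε q : ℝ} (hε : 0 < ε) (hq₀ : 0 ≤ q)
    (hq : ∀ i, 1 < q * coverWeight P t i) :
    ∫ s in {s : ι → ℝ | ∀ i, s i ∈ Set.Ico (0 : ℝ) 1}, ∏ p ∈ P, (∑ i ∈ t p, s i + ε) ^ (-q)
      ≤ ∏ i, ε ^ (1 - q * coverWeight P t i) / (q * coverWeight P t i - 1) := by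
  have hcube : MeasurableSet {s : ι → ℝ | ∀ i, s i ∈ Set.Ico (0 : ℝ) 1} := by measurability
  refine le_trans ?_ (integral_unitCube_prod_add_rpow_neg_le hq hε)
  refine integral_mono_of_nonneg (ae_restrict_of_forall_mem hcube fun s hs => ?_)
    (integrableOn_unitCube_prod_add_rpow _ hε)
    (ae_restrict_of_forall_mem hcube fun s hs => prod_rpow_neg_sum_add_le
      (fun i => (hs i).1) ht hε hq₀)
  exact prod_nonneg fun p _ => by
    have := sum_nonneg fun i (_ : i ∈ t p) => (hs i).1
    positivity

end UnitCube

theorem stmt7_general (m : ℕ) (hm : 2 ≤ m) (α : ℝ) (h : 1 < 2 * α ^ 2) :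
    ∃ C > (0 : ℝ), ∃ ε₀ > (0 : ℝ), ∀ ε : ℝ, 0 < ε → ε < ε₀ →
      (∫ s in {s : Fin (m - 1) → ℝ | ∀ i, s i ∈ Set.Ico (0 : ℝ) 1},
          ∏ p ∈ Finset.univ.filter
              (fun p : Fin (m - 1) × Fin (m - 1) => p.1 ≤ p.2),
            ((∑ i ∈ Finset.Icc p.1 p.2, s i) + ε) ^ (-2 * α ^ 2)) ≤
        C * ε ^ (((m : ℝ) - 1) * (1 - m * α ^ 2)) := by
  set P := Finset.univ.filter (fun p : Fin (m - 1) × Fin (m - 1) => p.1 ≤ p.2)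
  set w := coverWeight P fun p => Icc p.1 p.2
  have hP : ∀ p ∈ P, (Icc p.1 p.2).Nonempty := fun p hp => nonempty_Icc.2 (mem_filter.1 hp).2
  have hw : ∀ i, 1 < 2 * α ^ 2 * w i := fun i => h.trans_le <| le_mul_of_one_le_right
    (by positivity) (one_le_coverWeight (p := (i, i)) (by simp [P]) (Icc_self i))
  have hexp : ∑ i, (1 - 2 * α ^ 2 * w i) = ((m : ℝ) - 1) * (1 - m * α ^ 2) := by
    have hm1 : ((m - 1 : ℕ) : ℝ) = m - 1 := by rw [Nat.cast_sub (by omega), Nat.cast_one]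
    rw [sum_sub_distrib, ← mul_sum, sum_coverWeight hP, card_filter_fst_le_snd, sum_const,
      card_univ, Fintype.card_fin, nsmul_one, hm1]
    ring
  refine ⟨∏ i, (2 * α ^ 2 * w i - 1)⁻¹, prod_pos fun i _ => inv_pos.2 (by linarith [hw i]),
    1, one_pos, fun ε hε _ => ?_⟩
  simp only [neg_mul]
  calc _ ≤ ∏ i, ε ^ (1 - 2 * α ^ 2 * w i) / (2 * α ^ 2 * w i - 1) :=
        integral_unitCube_prod_rpow_neg_sum_add_le hP hε (by positivity) hw
    _ = _ := by
        rw [prod_div_distrib, ← rpow_sum_of_pos hε, hexp, div_eq_inv_mul, prod_inv_distrib]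

theorem stmt7 (m : ℕ) (hm : 2 ≤ m) (α : ℝ) (hα : 0 < α) (h : 1 < 2 * α ^ 2) :
    ∃ C > (0 : ℝ), ∃ ε₀ > (0 : ℝ), ∀ ε : ℝ, 0 < ε → ε < ε₀ →
      (∫ s in {s : Fin (m - 1) → ℝ | ∀ i, s i ∈ Set.Ico (0 : ℝ) 1},
          ∏ p ∈ Finset.univ.filter
              (fun p : Fin (m - 1) × Fin (m - 1) => p.1 ≤ p.2),
            ((∑ i ∈ Finset.Icc p.1 p.2, s i) + ε) ^ (-2 * α ^ 2)) ≤
        C * ε ^ (((m : ℝ) - 1) * (1 - m * α ^ 2)) :=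
  stmt7_general m hm α h
end
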